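/- arXiv:2504.02131 — 2 statements merged into one kernel-verified Lean document; each statement's English description precedes it below -/
import Mathlib

section
/- In the ordinal notation system OT_{Ω_ω}, if the maximal formal cardinality of α is strictly less than the maximal formal cardinality of β (i.e. max FC(α) < max FC(β)), then α < β in the term ordering. -/
/-!
Ordinal notation system `OT_{Ω_ω}` (Buchholz-style), statement 0:
if `max FC(α) < max FC(β)` then `α < β` in the term ordering.
-/

namespace Stmt0

/-- Ordinal terms of `OT_{Ω_ω}`: multiset sums `#S` (represented by lists),
`ω^α`, cardinals `Ω_n`, and collapses `ϑ_n α`. -/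
inductive OT where
  | sum : List OT → OT
  | omega : OT → OT
  | Om : ℕ → OT
  | theta : ℕ → OT → OT

noncomputable instance : DecidableEq OT := Classical.decEq OT

/-- `ℍ`-terms: those not of the form `#S`. -/
def isH : OT → Prop
  | .sum _ => False
  | _ => True

/-- Strongly critical terms: `Ω_n` and `ϑ_n α`. -/
def isSC : OT → Prop
  | .Om _ => True
  | .theta _ _ => True
  | _ => False

/-- `Kmem n α β` means `β ∈ K_n α`, the critical subterms. -/
inductive Kmem : ℕ → OT → OT → Prop where
  | sum {n l a β} : a ∈ l → Kmem n a β → Kmem n (.sum l) β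
  | omega {n a β} : Kmem n a β → Kmem n (.omega a) β
  | om {n m} : m < n → Kmem n (.Om m) (.Om m)
  | thetaGT {n m a β} : n < m → Kmem n a β → Kmem n (.theta m a) β
  | thetaLE {n m a} : m ≤ n → Kmem n (.theta m a) (.theta m a)

/-- The ordering `<` on ordinal terms.  (Clauses involving `≤` are split into
a `<`-constructor and an `=`-constructor.) -/
inductive lt : OT → OT → Prop where
  | sum_sum {al bl : List OT} (b : OT) :
      b ∈ ((bl : Multiset OT) - (al : Multiset OT)) →
      (∀ a ∈ ((al : Multiset OT) - (bl : Multiset OT)), lt a b) →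
      lt (.sum al) (.sum bl)
  | h_sum_lt {β : OT} {al : List OT} (a : OT) :
      isH β → a ∈ al → lt β a → lt β (.sum al)
  | h_sum_mem {β : OT} {al : List OT} :
      isH β → β ∈ al → lt β (.sum al)
  | sum_h {β : OT} {al : List OT} :
      isH β → (∀ a ∈ al, lt a β) → lt (.sum al) β
  | omega_omega {a b} : lt a b → lt (.omega a) (.omega b)
  | sc_omega {β a} : isSC β → lt β a → lt β (.omega a)
  | omega_sc_lt {β a} : isSC β → lt a β → lt (.omega a) β
  | omega_sc_eq {β} : isSC β → lt (.omega β) β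
  | om_om {m n} : m < n → lt (.Om m) (.Om n)
  | om_theta_lt {m n a β} : Kmem n a β → lt (.Om m) β → lt (.Om m) (.theta n a)
  | om_theta_eq {m n a} : Kmem n a (.Om m) → lt (.Om m) (.theta n a)
  | theta_om {m n a} : (∀ β, Kmem m a β → lt β (.Om n)) → lt (.theta m a) (.Om n)
  | theta_theta_lt {m n a b} :
      (∀ γ, Kmem m a γ → lt γ (.theta n b)) → m < n →
      lt (.theta m a) (.theta n b)
  | theta_theta_eq {n a b} :
      (∀ γ, Kmem n a γ → lt γ (.theta n b)) → lt a b →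
      lt (.theta n a) (.theta n b)
  | theta_theta_K_lt {m n a b γ} : Kmem n b γ → lt (.theta m a) γ →
      lt (.theta m a) (.theta n b)
  | theta_theta_K_eq {m n a b} : Kmem n b (.theta m a) →
      lt (.theta m a) (.theta n b)

/-- `FCmem α k` means `k ∈ FC(α)`, the formal cardinalities occurring in `α`. -/
inductive FCmem : OT → ℕ → Prop where
  | sum {l a k} : a ∈ l → FCmem a k → FCmem (.sum l) k
  | omega {a k} : FCmem a k → FCmem (.omega a) k
  | om {n} : FCmem (.Om n) n
  | theta {n a k} : FCmem a k → k < n → FCmem (.theta n a) k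

/-- `max FC(α)`, with `max ∅ = 0` (the set `FC(α)` is finite, so `sSup` is its max). -/
noncomputable def maxFC (α : OT) : ℕ := sSup {k | FCmem α k}

lemma one_le_size (α : OT) : 1 ≤ sizeOf α := by cases α <;> simp +arith

lemma fc_le_sizeOf {α k} (h : FCmem α k) : k ≤ sizeOf α := by
  induction h with
  | sum hm _ ih => have := List.sizeOf_lt_of_mem hm; simp; omega
  | omega _ ih => simp; omega
  | om => simp
  | theta _ hk ih => simp; omega

lemma bddFC (α : OT) : BddAbove {k | FCmem α k} :=
  ⟨sizeOf α, fun _ hk => fc_le_sizeOf hk⟩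

lemma fc_le_maxFC {α k} (h : FCmem α k) : k ≤ maxFC α :=
  le_csSup (bddFC α) h

lemma maxFC_le {α : OT} {m : ℕ} (h : ∀ k, FCmem α k → k ≤ m) : maxFC α ≤ m := by
  by_cases hne : {k | FCmem α k}.Nonempty
  · exact csSup_le hne h
  · have : {k | FCmem α k} = ∅ := Set.not_nonempty_iff_eq_empty.1 hne
    simp [maxFC, this, csSup_empty]

lemma maxFC_mem {β : OT} (h : 0 < maxFC β) : FCmem β (maxFC β) := by
  have hne : {k | FCmem β k}.Nonempty := by
    by_contra hne
    have : {k | FCmem β k} = ∅ := Set.not_nonempty_iff_eq_empty.1 hne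
    simp [maxFC, this, csSup_empty] at h
  exact Nat.sSup_mem hne (bddFC β)

lemma maxFC_Om (n : ℕ) : maxFC (.Om n) = n := by
  have h1 : FCmem (.Om n) n := FCmem.om
  have h2 : maxFC (.Om n) ≤ n := maxFC_le (fun k hk => by cases hk; exact le_rfl)
  exact le_antisymm h2 (fc_le_maxFC h1)

lemma Kmem_size {n a γ} (h : Kmem n a γ) : sizeOf γ ≤ sizeOf a := by
  induction h with
  | sum hm _ ih => have := List.sizeOf_lt_of_mem hm; simp; omega
  | omega _ ih => simp; omega
  | om _ => exact le_rfl
  | thetaGT _ _ ih => simp; omega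
  | thetaLE _ => exact le_rfl

lemma Kmem_FC {n a γ} (h : Kmem n a γ) : ∀ k, FCmem γ k → FCmem a k ∧ k < n := by
  induction h with
  | sum hm _ ih =>
      intro k hk; obtain ⟨h1, h2⟩ := ih k hk; exact ⟨FCmem.sum hm h1, h2⟩
  | omega _ ih =>
      intro k hk; obtain ⟨h1, h2⟩ := ih k hk; exact ⟨FCmem.omega h1, h2⟩
  | om hmn =>
      intro k hk; cases hk; exact ⟨FCmem.om, hmn⟩
  | thetaGT hnm _ ih =>
      intro k hk; obtain ⟨h1, h2⟩ := ih k hk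
      exact ⟨FCmem.theta h1 (lt_trans h2 hnm), h2⟩
  | thetaLE hmn =>
      intro k hk
      cases hk with
      | theta h1 h2 => exact ⟨FCmem.theta h1 h2, lt_of_lt_of_le h2 hmn⟩

lemma fc_witness {b : OT} {N n : ℕ} (h : FCmem b N) :
    N < n → ∃ γ, Kmem n b γ ∧ FCmem γ N := by
  induction h with
  | sum hm _ ih =>
      intro hn; obtain ⟨γ, h1, h2⟩ := ih hn; exact ⟨γ, Kmem.sum hm h1, h2⟩
  | omega _ ih =>
      intro hn; obtain ⟨γ, h1, h2⟩ := ih hn; exact ⟨γ, Kmem.omega h1, h2⟩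
  | om => intro hn; exact ⟨_, Kmem.om hn, FCmem.om⟩
  | @theta p c k hc hkp ih =>
      intro hn
      by_cases hp : n < p
      · obtain ⟨γ, h1, h2⟩ := ih hn; exact ⟨γ, Kmem.thetaGT hp h1, h2⟩
      · exact ⟨.theta p c, Kmem.thetaLE (by omega), FCmem.theta hc hkp⟩

lemma main_fuel : ∀ (F : ℕ) (α β : OT), sizeOf α + sizeOf β ≤ F →
    maxFC α < maxFC β → lt α β := by
  intro F
  induction F with
  | zero =>
      intro α β hs _
      have := one_le_size α; have := one_le_size β; omega
  | succ F ih =>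
    intro α β hs h
    have hNpos : 0 < maxFC β := lt_of_le_of_lt (Nat.zero_le _) h
    have hB : FCmem β (maxFC β) := maxFC_mem hNpos
    cases β with
    | sum bl =>
      cases hB with
      | sum hbmem hfb =>
        rename_i b
        have hbig : maxFC α < maxFC b := lt_of_lt_of_le h (fc_le_maxFC hfb)
        have hsb : sizeOf b < sizeOf (OT.sum bl) := by
          have := List.sizeOf_lt_of_mem hbmem; simp; omega
        cases α with
        | sum al =>
          have hbal : b ∉ al := by
            intro hmem
            have := fc_le_maxFC (FCmem.sum hmem hfb)
            omega
          apply lt.sum_sum b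
          · rw [← Multiset.count_pos, Multiset.count_sub]
            have h1 : Multiset.count b (al : Multiset OT) = 0 := by
              rwa [Multiset.count_eq_zero, Multiset.mem_coe]
            have h2 : 0 < Multiset.count b (bl : Multiset OT) :=
              Multiset.count_pos.2 (Multiset.mem_coe.2 hbmem)
            omega
          · intro a ha
            have ha' : a ∈ al := Multiset.mem_coe.1 (Multiset.mem_of_le tsub_le_self ha)
            have hsa : sizeOf a < sizeOf (OT.sum al) := by
              have := List.sizeOf_lt_of_mem ha'; simp; omega
            refine ih a b (by omega) ?_
            have : maxFC a ≤ maxFC (OT.sum al) :=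
              maxFC_le (fun k hk => fc_le_maxFC (FCmem.sum ha' hk))
            omega
        | omega a =>
          exact lt.h_sum_lt b trivial hbmem (ih _ b (by omega) hbig)
        | Om m =>
          exact lt.h_sum_lt b trivial hbmem (ih _ b (by omega) hbig)
        | theta m a =>
          exact lt.h_sum_lt b trivial hbmem (ih _ b (by omega) hbig)
    | omega b =>
      have hfb : FCmem b (maxFC (OT.omega b)) := by cases hB with | omega h' => exact h'
      have hbig : maxFC α < maxFC b := lt_of_lt_of_le h (fc_le_maxFC hfb)
      have hsb : sizeOf b < sizeOf (OT.omega b) := by simp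
      cases α with
      | sum al =>
        refine lt.sum_h trivial ?_
        intro a ha
        have hsa : sizeOf a < sizeOf (OT.sum al) := by
          have := List.sizeOf_lt_of_mem ha; simp; omega
        refine ih a (OT.omega b) (by omega) ?_
        have : maxFC a ≤ maxFC (OT.sum al) :=
          maxFC_le (fun k hk => fc_le_maxFC (FCmem.sum ha hk))
        omega
      | omega a =>
        have hsa : sizeOf a < sizeOf (OT.omega a) := by simp
        refine lt.omega_omega (ih a b (by omega) ?_)
        have : maxFC a ≤ maxFC (OT.omega a) :=
          maxFC_le (fun k hk => fc_le_maxFC (FCmem.omega hk))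
        omega
      | Om m => exact lt.sc_omega trivial (ih _ b (by omega) hbig)
      | theta m a => exact lt.sc_omega trivial (ih _ b (by omega) hbig)
    | Om n =>
      have hn : maxFC α < n := by rw [maxFC_Om] at h; exact h
      cases α with
      | sum al =>
        refine lt.sum_h trivial ?_
        intro a ha
        have hsa : sizeOf a < sizeOf (OT.sum al) := by
          have := List.sizeOf_lt_of_mem ha; simp; omega
        refine ih a (OT.Om n) (by omega) ?_
        have : maxFC a ≤ maxFC (OT.sum al) :=
          maxFC_le (fun k hk => fc_le_maxFC (FCmem.sum ha hk))
        omega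
      | omega a =>
        have hsa : sizeOf a < sizeOf (OT.omega a) := by simp
        refine lt.omega_sc_lt trivial (ih a (OT.Om n) (by omega) ?_)
        have : maxFC a ≤ maxFC (OT.omega a) :=
          maxFC_le (fun k hk => fc_le_maxFC (FCmem.omega hk))
        omega
      | Om m =>
        rw [maxFC_Om] at hn
        exact lt.om_om hn
      | theta m a =>
        apply lt.theta_om
        intro γ hK
        have hsz : sizeOf γ ≤ sizeOf a := Kmem_size hK
        have hsa : sizeOf a < sizeOf (OT.theta m a) := by simp
        refine ih γ (OT.Om n) (by omega) ?_
        have hmax : maxFC γ ≤ maxFC (OT.theta m a) := by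
          apply maxFC_le
          intro k hk
          obtain ⟨h1, h2⟩ := Kmem_FC hK k hk
          exact fc_le_maxFC (FCmem.theta h1 h2)
        rw [maxFC_Om]
        omega
    | theta n b =>
      have hfb : FCmem b (maxFC (OT.theta n b)) ∧ maxFC (OT.theta n b) < n := by
        cases hB with | theta h1 h2 => exact ⟨h1, h2⟩
      obtain ⟨γ, hKγ, hFγ⟩ := fc_witness hfb.1 hfb.2
      have hγbig : maxFC α < maxFC γ := lt_of_lt_of_le h (fc_le_maxFC hFγ)
      have hsγ : sizeOf γ ≤ sizeOf b := Kmem_size hKγ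
      have hsb : sizeOf b < sizeOf (OT.theta n b) := by simp
      cases α with
      | sum al =>
        refine lt.sum_h trivial ?_
        intro a ha
        have hsa : sizeOf a < sizeOf (OT.sum al) := by
          have := List.sizeOf_lt_of_mem ha; simp; omega
        refine ih a (OT.theta n b) (by omega) ?_
        have : maxFC a ≤ maxFC (OT.sum al) :=
          maxFC_le (fun k hk => fc_le_maxFC (FCmem.sum ha hk))
        omega
      | omega a =>
        have hsa : sizeOf a < sizeOf (OT.omega a) := by simp
        refine lt.omega_sc_lt trivial (ih a (OT.theta n b) (by omega) ?_)
        have : maxFC a ≤ maxFC (OT.omega a) :=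
          maxFC_le (fun k hk => fc_le_maxFC (FCmem.omega hk))
        omega
      | Om m =>
        exact lt.om_theta_lt hKγ (ih _ γ (by omega) hγbig)
      | theta m a =>
        exact lt.theta_theta_K_lt hKγ (ih _ γ (by omega) hγbig)

/-- if `max FC(α) < max FC(β)` then `α < β`. -/
theorem maxFC_lt_imp_lt (α β : OT) (h : maxFC α < maxFC β) : lt α β :=
  main_fuel (sizeOf α + sizeOf β) α β le_rfl h

end Stmt0
end

section
/- In OT^{poly}_{Ω_ω}, shifting is order-preserving on terms with appropriately bounded cardinalities: if α < β, max FC^{≤0}(α) ≤ −n, and max FC^{≤0}(β) ≤ −n, then α^{≤0}_{+n} < β^{≤0}_{+n}. -/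
/-!
STATEMENT 7: in `OT^{poly}_{Ω_ω}` shifting is order-preserving on terms
with appropriately bounded cardinalities.
-/

namespace Stmt7

/-- Ordinal terms of the polymorphic system `OT^{poly}_{Ω_ω}` (with variables):
multiset sums `#S`, `ω^α`, polymorphic cardinals `Ω^{(J)}`, collapses `ϑα`,
and variables `v^{(J)}` (a variable is a name together with a level). -/
inductive OTP where
  | sum : List OTP → OTP
  | omega : OTP → OTP
  | Om : ℤ → OTP
  | theta : OTP → OTP
  | var : ℕ → ℤ → OTP

noncomputable instance : DecidableEq OTP := Classical.decEq OTP

/-- `ℍ`-terms: those not of the form `#S`. -/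
def isH : OTP → Prop
  | .sum _ => False
  | _ => True

/-- Strongly critical terms: `Ω^{(J)}`, `ϑα`, and variables. -/
def isSC : OTP → Prop
  | .Om _ => True
  | .theta _ => True
  | .var _ _ => True
  | _ => False

/-- The shift `α^{≤J}_{+n}` (use negative `n` for downward shifts):
shift the indices of the cardinals that are free at level `J`. -/
def shiftP : ℤ → ℤ → OTP → OTP
  | J, n, .sum l => .sum (l.attach.map fun x => shiftP J n x.1)
  | J, n, .omega a => .omega (shiftP J n a)
  | J, n, .Om J' => if J' ≤ J then .Om (J' + n) else .Om J'
  | J, n, .theta a => .theta (shiftP (J - 1) n a)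
  | J, n, .var v J' => if J' ≤ J then .var v (J' + n) else .var v J'
termination_by J n a => sizeOf a
decreasing_by
  all_goals simp_wf
  all_goals try omega
  have := List.sizeOf_lt_of_mem x.2
  omega

/-- `FCmem α J k` means `k ∈ FC^{≤J}(α)`. -/
inductive FCmem : OTP → ℤ → ℤ → Prop where
  | sum {l a J k} : a ∈ l → FCmem a J k → FCmem (.sum l) J k
  | omega {a J k} : FCmem a J k → FCmem (.omega a) J k
  | om {J' J} : J' ≤ J → FCmem (.Om J') J (J' - J)
  | var {v J' J} : J' ≤ J → FCmem (.var v J') J (J' - J)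
  | theta {a J k} : FCmem a (J - 1) k → FCmem (.theta a) J k

/-- `IsMaxFC α b`: `b` is `max FC(α) = max FC^{≤0}(α)`, an element of
`ℤ ∪ {−∞}` (`⊥` when `FC(α)` is empty; the maximum is attained otherwise). -/
def IsMaxFC (α : OTP) (b : WithBot ℤ) : Prop :=
  (∀ k : ℤ, FCmem α 0 k → (k : WithBot ℤ) ≤ b) ∧
  ((∃ k : ℤ, FCmem α 0 k ∧ (k : WithBot ℤ) = b) ∨
    ((∀ k : ℤ, ¬ FCmem α 0 k) ∧ b = ⊥))

/-- `IsGround α g`: `g` is the ground `𝔾(α) = min FC(α)` (`⊥` if `FC(α) = ∅`). -/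
def IsGround (α : OTP) (g : WithBot ℤ) : Prop :=
  ((∀ k : ℤ, ¬ FCmem α 0 k) ∧ g = ⊥) ∨
  (∃ k : ℤ, FCmem α 0 k ∧ g = (k : WithBot ℤ) ∧ ∀ k' : ℤ, FCmem α 0 k' → k ≤ k')

/-- `KmemP J α β` means `β ∈ K^{<J} α`. -/
inductive KmemP : ℤ → OTP → OTP → Prop where
  | sum {J l a β} : a ∈ l → KmemP J a β → KmemP J (.sum l) β
  | omega {J a β} : KmemP J a β → KmemP J (.omega a) β
  | om {J J'} : J' < J → KmemP J (.Om J') (.Om (J' - (J - 1)))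
  | var {J v J'} : J' < J → KmemP J (.var v J') (.var v (J' - (J - 1)))
  | thetaSmall {J a} : (∀ k, FCmem (.theta a) 0 k → k < J) →
      KmemP J (.theta a) (shiftP 0 (1 - J) (.theta a))
  | thetaBig {J a β} : (∃ k, FCmem (.theta a) 0 k ∧ J ≤ k) →
      KmemP (J - 1) a β → KmemP J (.theta a) β

/-- The ordering `<` on polymorphic ordinal terms. -/
inductive ltP : OTP → OTP → Prop where
  | sum_sum {al bl : List OTP} (b : OTP) :
      b ∈ ((bl : Multiset OTP) - (al : Multiset OTP)) →
      (∀ a ∈ ((al : Multiset OTP) - (bl : Multiset OTP)), ltP a b) →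
      ltP (.sum al) (.sum bl)
  | h_sum_lt {β : OTP} {al : List OTP} (a : OTP) :
      isH β → a ∈ al → ltP β a → ltP β (.sum al)
  | h_sum_mem {β : OTP} {al : List OTP} :
      isH β → β ∈ al → ltP β (.sum al)
  | sum_h {β : OTP} {al : List OTP} :
      isH β → (∀ a ∈ al, ltP a β) → ltP (.sum al) β
  | omega_omega {a b} : ltP a b → ltP (.omega a) (.omega b)
  | sc_omega {β a} : isSC β → ltP β a → ltP β (.omega a)
  | omega_sc_lt {β a} : isSC β → ltP a β → ltP (.omega a) β
  | omega_sc_eq {β} : isSC β → ltP (.omega β) β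
  | om_om {J J'} : J < J' → ltP (.Om J) (.Om J')
  | var_om {v J} : ltP (.var v J) (.Om J)
  | om_theta_lt {J a β} : KmemP 0 a β → ltP (.Om J) β → ltP (.Om J) (.theta a)
  | om_theta_eq {J a} : KmemP 0 a (.Om J) → ltP (.Om J) (.theta a)
  | var_theta_lt {v J a β} : KmemP 0 a β → ltP (.var v J) β → ltP (.var v J) (.theta a)
  | var_theta_eq {v J a} : KmemP 0 a (.var v J) → ltP (.var v J) (.theta a)
  | theta_om {J a} : (∀ β, KmemP 0 a β → ltP β (.Om J)) → ltP (.theta a) (.Om J)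
  | theta_theta_main {a b} : ltP a b →
      (∀ γ, KmemP 0 a γ → ltP γ (.theta b)) → ltP (.theta a) (.theta b)
  | theta_theta_K_lt {a b γ} : ltP b a → KmemP 0 b γ → ltP (.theta a) γ →
      ltP (.theta a) (.theta b)
  | theta_theta_K_eq {a b} : ltP b a → KmemP 0 b (.theta a) →
      ltP (.theta a) (.theta b)

/-- `α ≤ β`. -/
def leP (α β : OTP) : Prop := ltP α β ∨ α = β

/-- The `ℍ`-components of a term. -/
def comps : OTP → List OTP
  | .sum l => l
  | a => [a]

/-- The sum `α # β`, merging the `ℍ`-components of `α` and `β`. -/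
def msum (a b : OTP) : OTP :=
  match comps a ++ comps b with
  | [x] => x
  | l => .sum l

/-- `OccursVP v α`: the variable `v` occurs in `α`. -/
inductive OccursVP (v : ℕ) : OTP → Prop where
  | sum {l a} : a ∈ l → OccursVP v a → OccursVP v (.sum l)
  | omega {a} : OccursVP v a → OccursVP v (.omega a)
  | theta {a} : OccursVP v a → OccursVP v (.theta a)
  | var {J} : OccursVP v (.var v J)

/-- Substitution `α[v ↦^J β]`. -/
def substP (v : ℕ) (γ : OTP) : ℤ → OTP → OTP
  | J, .sum l => .sum (l.attach.map fun x => substP v γ J x.1)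
  | J, .omega a => .omega (substP v γ J a)
  | J, .Om J' => .Om J'
  | J, .theta a => .theta (substP v γ (J - 1) a)
  | J, .var w J' => if w = v then shiftP 0 J γ else .var w J'
termination_by J a => sizeOf a
decreasing_by
  all_goals simp_wf
  all_goals try omega
  have := List.sizeOf_lt_of_mem x.2
  omega

/-- `v` is `J`-substitutable in `α`. -/
inductive SubstitutableP (v : ℕ) : ℤ → OTP → Prop where
  | sum {J l} : (∀ a ∈ l, SubstitutableP v J a) → SubstitutableP v J (.sum l)
  | omega {J a} : SubstitutableP v J a → SubstitutableP v J (.omega a)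
  | om {J J'} : SubstitutableP v J (.Om J')
  | theta {J a} : SubstitutableP v (J - 1) a → SubstitutableP v J (.theta a)
  | var_ne {J w J'} : v ≠ w → SubstitutableP v J (.var w J')
  | var_eq {J} : SubstitutableP v J (.var v J)

/-- `Normalize α α*`: `α*` is `α` if `max FC(α) = −∞`, else `α` shifted so
that `max FC(α*) = 0`. -/
def Normalize (α β : OTP) : Prop :=
  ((∀ k : ℤ, ¬ FCmem α 0 k) ∧ β = α) ∨
  (∃ m : ℤ, IsMaxFC α (m : WithBot ℤ) ∧ β = shiftP 0 (-m) α)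

/-- The restriction of `<` to a set of terms. -/
def restrictLt (s : Set OTP) : OTP → OTP → Prop :=
  fun x y => x ∈ s ∧ y ∈ s ∧ ltP x y

/-- The well-founded part of `(s, <)`. -/
def wfPart (s : Set OTP) : Set OTP := {a | a ∈ s ∧ Acc (restrictLt s) a}

/-- `M_{−∞}`: terms of formal cardinality `−∞`. -/
def Mneg : Set OTP := {a | ∀ k : ℤ, ¬ FCmem a 0 k}

/-- `Acc_{−∞}`. -/
def AccNeg : Set OTP := wfPart Mneg

/-- `M_n` relative to the union `prev` of previous `Acc` sets. -/
def Mof (n : ℕ) (prev : Set OTP) : Set OTP :=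
  {α | IsMaxFC α (0 : ℤ) ∧ (∀ k : ℤ, FCmem α 0 k → -(n : ℤ) ≤ k) ∧
    ∀ β βn, KmemP 0 α β → Normalize β βn → βn ∈ prev}

/-- `Acc_{−∞} ∪ ⋃_{i<n} Acc_i`. -/
def AccUpto : ℕ → Set OTP
  | 0 => AccNeg
  | n + 1 => AccUpto n ∪ wfPart (Mof n (AccUpto n))

/-- `Acc_c` for `c ∈ {−∞} ∪ ℕ`. -/
def AccP : WithBot ℕ → Set OTP :=
  fun c => c.recBotCoe AccNeg (fun n => wfPart (Mof n (AccUpto n)))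

/-- The ordinal term `0 = #∅`. -/
def zeroT : OTP := .sum []

/-- `D_{0,γ}(β) = ϑ(ω^{Ω^{(0)} # β} # γ)`. -/
def D0 (γ β : OTP) : OTP := .theta (msum (.omega (msum (.Om 0) β)) γ)

/-- `D_{m,γ}(β)`, with `D_{m+1,γ}(β) = D_{0,0}(D_{m,γ}(β))`. -/
def Dm : ℕ → OTP → OTP → OTP
  | 0, γ, β => D0 γ β
  | m + 1, γ, β => D0 zeroT (Dm m γ β)

/-- `α ≪_γ β`: `α < β` and every `η ∈ K^{<0}α` is bounded by `D_{m,γ}(β)`,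
where `m` is least such that `max FC(D_{m,γ}(β)) ≤ max FC(η)`. -/
def llt (γ α β : OTP) : Prop :=
  ltP α β ∧ ∀ η, KmemP 0 α η → ∃ m : ℕ,
    (∃ bη bD : WithBot ℤ, IsMaxFC η bη ∧ IsMaxFC (Dm m γ β) bD ∧ bD ≤ bη ∧
      ∀ m' : ℕ, m' < m → ∀ bD' : WithBot ℤ, IsMaxFC (Dm m' γ β) bD' → ¬ bD' ≤ bη) ∧
    leP η (Dm m γ β)


-- ===== auxiliary lemmas =====

theorem shiftP_sum (J n : ℤ) (l : List OTP) :
    shiftP J n (.sum l) = .sum (l.map (shiftP J n)) := by rw [shiftP]; simp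

theorem shiftP_omega (J n : ℤ) (a : OTP) :
    shiftP J n (.omega a) = .omega (shiftP J n a) := by rw [shiftP]

theorem shiftP_theta (J n : ℤ) (a : OTP) :
    shiftP J n (.theta a) = .theta (shiftP (J-1) n a) := by rw [shiftP]

theorem shiftP_Om (J n J' : ℤ) :
    shiftP J n (.Om J') = if J' ≤ J then .Om (J'+n) else .Om J' := by rw [shiftP]

theorem shiftP_var (J n : ℤ) (v : ℕ) (J' : ℤ) :
    shiftP J n (.var v J') = if J' ≤ J then .var v (J'+n) else .var v J' := by rw [shiftP]

theorem FCmem_sum_iff {l L k} : FCmem (.sum l) L k ↔ ∃ a ∈ l, FCmem a L k := by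
  constructor
  · rintro (h | - | - | - | -); exact ⟨_, ‹_›, ‹_›⟩
  · rintro ⟨a, ha, h⟩; exact .sum ha h

theorem FCmem_omega_iff {a L k} : FCmem (.omega a) L k ↔ FCmem a L k := by
  constructor
  · rintro (h|h|h|h|h); assumption
  · exact .omega

theorem FCmem_theta_iff {a L k} : FCmem (.theta a) L k ↔ FCmem a (L-1) k := by
  constructor
  · rintro (h|h|h|h|h); assumption
  · exact .theta

theorem FCmem_Om_iff {J' L k} : FCmem (.Om J') L k ↔ J' ≤ L ∧ k = J' - L := by
  constructor
  · rintro (h|h|h|h|h); exact ⟨‹_›, rfl⟩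
  · rintro ⟨h, rfl⟩; exact .om h

theorem FCmem_var_iff {v J' L k} : FCmem (.var v J') L k ↔ J' ≤ L ∧ k = J' - L := by
  constructor
  · rintro (h|h|h|h|h); exact ⟨‹_›, rfl⟩
  · rintro ⟨h, rfl⟩; exact .var h

theorem FC_nonpos {x L k} (h : FCmem x L k) : k ≤ 0 := by
  induction h with
  | sum _ _ ih => exact ih
  | omega _ ih => exact ih
  | om h => omega
  | var h => omega
  | theta _ ih => exact ih

theorem FC_level {x L k} (h : FCmem x L k) (L' : ℤ) (hk : k + (L - L') ≤ 0) :
    FCmem x L' (k + (L - L')) := by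
  induction h generalizing L' with
  | sum ha _ ih => exact .sum ha (ih L' hk)
  | omega _ ih => exact .omega (ih L' hk)
  | @om J' J h =>
      have : J' - J + (J - L') = J' - L' := by ring
      rw [this] at hk ⊢
      exact .om (by omega)
  | @var v J' J h =>
      have : J' - J + (J - L') = J' - L' := by ring
      rw [this] at hk ⊢
      exact .var (by omega)
  | @theta a J k _ ih =>
      have h2 : k + (J - 1 - (L' - 1)) ≤ 0 := by omega
      have := ih (L' - 1) h2
      have e : k + (J - 1 - (L' - 1)) = k + (J - L') := by ring
      rw [e] at this
      exact .theta this
theorem FC_shift (n : ℤ) (hn : 0 ≤ n) (x : OTP) : ∀ (M L k' : ℤ),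
    FCmem (shiftP M n x) L k' ↔
      ((∃ k, FCmem x L k ∧ k ≤ M - L ∧ k' = k + n ∧ k' ≤ 0) ∨
       (FCmem x L k' ∧ M - L < k')) := by
  intro M L k'
  cases x with
  | sum l =>
      rw [shiftP_sum, FCmem_sum_iff]
      simp only [List.mem_map]
      constructor
      · rintro ⟨a', ⟨a, ha, rfl⟩, h⟩
        rcases (FC_shift n hn a M L k').1 h with ⟨k, hk, h1, h2, h3⟩ | ⟨hk, h1⟩
        · exact Or.inl ⟨k, FCmem_sum_iff.2 ⟨a, ha, hk⟩, h1, h2, h3⟩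
        · exact Or.inr ⟨FCmem_sum_iff.2 ⟨a, ha, hk⟩, h1⟩
      · rintro (⟨k, hk, h1, h2, h3⟩ | ⟨hk, h1⟩)
        · rcases FCmem_sum_iff.1 hk with ⟨a, ha, hka⟩
          exact ⟨_, ⟨a, ha, rfl⟩, (FC_shift n hn a M L k').2 (Or.inl ⟨k, hka, h1, h2, h3⟩)⟩
        · rcases FCmem_sum_iff.1 hk with ⟨a, ha, hka⟩
          exact ⟨_, ⟨a, ha, rfl⟩, (FC_shift n hn a M L k').2 (Or.inr ⟨hka, h1⟩)⟩
  | omega a =>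
      rw [shiftP_omega, FCmem_omega_iff, FCmem_omega_iff] at *
      have := FC_shift n hn a M L k'
      simpa only [FCmem_omega_iff] using this
  | theta a =>
      rw [shiftP_theta, FCmem_theta_iff]
      have := FC_shift n hn a (M-1) (L-1) k'
      simp only [FCmem_theta_iff]
      have e : M - 1 - (L - 1) = M - L := by ring
      rw [e] at this
      exact this
  | Om J' =>
      rw [shiftP_Om]
      split
      · next h =>
          simp only [FCmem_Om_iff]
          constructor
          · rintro ⟨h1, rfl⟩
            exact Or.inl ⟨J' - L, ⟨by omega, rfl⟩, by omega, by omega, by omega⟩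
          · rintro (⟨k, ⟨h4, rfl⟩, h1, h2, h3⟩ | ⟨⟨h4, rfl⟩, h1⟩) <;> omega
      · next h =>
          simp only [FCmem_Om_iff]
          constructor
          · rintro ⟨h1, rfl⟩
            exact Or.inr ⟨⟨h1, rfl⟩, by omega⟩
          · rintro (⟨k, ⟨h4, rfl⟩, h1, h2, h3⟩ | ⟨⟨h4, rfl⟩, h1⟩) <;> omega
  | var v J' =>
      rw [shiftP_var]
      split
      · next h =>
          simp only [FCmem_var_iff]
          constructor
          · rintro ⟨h1, rfl⟩
            exact Or.inl ⟨J' - L, ⟨by omega, rfl⟩, by omega, by omega, by omega⟩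
          · rintro (⟨k, ⟨h4, rfl⟩, h1, h2, h3⟩ | ⟨⟨h4, rfl⟩, h1⟩) <;> omega
      · next h =>
          simp only [FCmem_var_iff]
          constructor
          · rintro ⟨h1, rfl⟩
            exact Or.inr ⟨⟨h1, rfl⟩, by omega⟩
          · rintro (⟨k, ⟨h4, rfl⟩, h1, h2, h3⟩ | ⟨⟨h4, rfl⟩, h1⟩) <;> omega
termination_by sizeOf x
decreasing_by
  all_goals simp_wf
  all_goals try omega
  all_goals (have := List.sizeOf_lt_of_mem ha; omega)
theorem shift_unshift (n m : ℤ) (x : OTP)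
    (hb : ∀ k, FCmem x m k → k ≤ -n) : shiftP m (-n) (shiftP m n x) = x := by
  cases x with
  | sum l =>
      rw [shiftP_sum, shiftP_sum, List.map_map]
      congr 1
      conv_rhs => rw [← List.map_id l]
      apply List.map_congr_left
      intro a ha
      exact shift_unshift n m a (fun k hk => hb k (.sum ha hk))
  | omega a =>
      rw [shiftP_omega, shiftP_omega,
        shift_unshift n m a (fun k hk => hb k (.omega hk))]
  | theta a =>
      rw [shiftP_theta, shiftP_theta,
        shift_unshift n (m-1) a (fun k hk => hb k (.theta hk))]
  | Om J' =>
      rw [shiftP_Om]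
      split
      · next h =>
          have := hb (J' - m) (.om h)
          rw [shiftP_Om, if_pos (by omega)]
          congr 1; omega
      · next h =>
          rw [shiftP_Om, if_neg h]
  | var v J' =>
      rw [shiftP_var]
      split
      · next h =>
          have := hb (J' - m) (.var h)
          rw [shiftP_var, if_pos (by omega)]
          congr 1; omega
      · next h =>
          rw [shiftP_var, if_neg h]
termination_by sizeOf x
decreasing_by
  all_goals subst_vars
  all_goals simp_wf
  all_goals try omega
  all_goals (have := List.sizeOf_lt_of_mem ha; omega)

theorem shift_inj {n m : ℤ} {x y : OTP}
    (hx : ∀ k, FCmem x m k → k ≤ -n) (hy : ∀ k, FCmem y m k → k ≤ -n)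
    (h : shiftP m n x = shiftP m n y) : x = y := by
  have := congrArg (shiftP m (-n)) h
  rwa [shift_unshift n m x hx, shift_unshift n m y hy] at this

theorem shift_comm (n p L1 L2 : ℤ) (x : OTP) (h1 : L1 ≤ L2) (h2 : L1 + p ≤ L2)
    (hb : ∀ k, FCmem x L1 k → k ≤ -n) :
    shiftP L2 p (shiftP L1 n x) = shiftP (L1+p) n (shiftP L2 p x) := by
  cases x with
  | sum l =>
      simp only [shiftP_sum, List.map_map]
      congr 1
      apply List.map_congr_left
      intro a ha
      exact shift_comm n p L1 L2 a h1 h2 (fun k hk => hb k (.sum ha hk))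
  | omega a =>
      simp only [shiftP_omega]
      rw [shift_comm n p L1 L2 a h1 h2 (fun k hk => hb k (.omega hk))]
  | theta a =>
      simp only [shiftP_theta]
      rw [shift_comm n p (L1-1) (L2-1) a (by omega) (by omega)
        (fun k hk => hb k (.theta hk))]
      congr 2
      omega
  | Om J' =>
      have hbb : J' ≤ L1 → J' + n ≤ L1 := fun h => by
        have := hb (J' - L1) (.om h); omega
      simp only [shiftP_Om]
      split_ifs <;> simp only [shiftP_Om] <;> split_ifs <;>
        first | rfl | (exfalso; omega) | (congr 1; omega)
  | var v J' =>
      have hbb : J' ≤ L1 → J' + n ≤ L1 := fun h => by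
        have := hb (J' - L1) (.var h); omega
      simp only [shiftP_var]
      split_ifs <;> simp only [shiftP_var] <;> split_ifs <;>
        first | rfl | (exfalso; omega) | (congr 1; omega)
termination_by sizeOf x
decreasing_by
  all_goals subst_vars
  all_goals simp_wf
  all_goals try omega
  all_goals (have := List.sizeOf_lt_of_mem ha; omega)

theorem isH_shift {x : OTP} (h : isH x) (m n : ℤ) : isH (shiftP m n x) := by
  cases x with
  | sum l => exact absurd h (by simp [isH])
  | omega a => rw [shiftP_omega]; trivial
  | theta a => rw [shiftP_theta]; trivial
  | Om J' => rw [shiftP_Om]; split <;> trivial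
  | var v J' => rw [shiftP_var]; split <;> trivial

theorem isSC_shift {x : OTP} (h : isSC x) (m n : ℤ) : isSC (shiftP m n x) := by
  cases x with
  | sum l => exact absurd h (by simp [isSC])
  | omega a => exact absurd h (by simp [isSC])
  | theta a => rw [shiftP_theta]; trivial
  | Om J' => rw [shiftP_Om]; split <;> trivial
  | var v J' => rw [shiftP_var]; split <;> trivial
theorem KmemP_sum_iff {j : ℤ} {l γ} : KmemP j (.sum l) γ ↔ ∃ a ∈ l, KmemP j a γ := by
  constructor
  · rintro (h | - | - | - | - | -); exact ⟨_, ‹_›, ‹_›⟩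
  · rintro ⟨a, ha, h⟩; exact .sum ha h

theorem KmemP_omega_iff {j : ℤ} {a γ} : KmemP j (.omega a) γ ↔ KmemP j a γ := by
  constructor
  · rintro (h|h|h|h|h|h); assumption
  · exact .omega

theorem KmemP_Om_iff {j J' : ℤ} {γ} : KmemP j (.Om J') γ ↔ J' < j ∧ γ = .Om (J' - (j-1)) := by
  constructor
  · rintro (h|h|h|h|h|h); exact ⟨‹_›, rfl⟩
  · rintro ⟨h, rfl⟩; exact .om h

theorem KmemP_var_iff {j : ℤ} {v J' γ} : KmemP j (.var v J') γ ↔ J' < j ∧ γ = .var v (J' - (j-1)) := by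
  constructor
  · rintro (h|h|h|h|h|h); exact ⟨‹_›, rfl⟩
  · rintro ⟨h, rfl⟩; exact .var h

theorem KmemP_theta_iff {j : ℤ} {a γ} : KmemP j (.theta a) γ ↔
    ((∀ k, FCmem (.theta a) 0 k → k < j) ∧ γ = shiftP 0 (1-j) (.theta a)) ∨
    ((∃ k, FCmem (.theta a) 0 k ∧ j ≤ k) ∧ KmemP (j-1) a γ) := by
  constructor
  · rintro (h|h|h|h|h|h)
    · exact Or.inl ⟨‹_›, rfl⟩
    · exact Or.inr ⟨‹_›, ‹_›⟩
  · rintro (⟨h, rfl⟩ | ⟨h1, h2⟩)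
    · exact .thetaSmall h
    · exact .thetaBig h1 h2

theorem K_shift (n : ℤ) (hn : 0 ≤ n) (x : OTP) : ∀ (j m : ℤ) (γ' : OTP), j ≤ 0 → m ≤ j - 1 →
    (∀ k, FCmem x m k → k ≤ -n) →
    (KmemP j (shiftP m n x) γ' ↔ ∃ γ, KmemP j x γ ∧ γ' = shiftP (m-j+1) n γ) := by
  intro j m γ' hj hm hb
  cases x with
  | sum l =>
      rw [shiftP_sum, KmemP_sum_iff]
      simp only [List.mem_map, KmemP_sum_iff]
      constructor
      · rintro ⟨a', ⟨a, ha, rfl⟩, h⟩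
        rcases (K_shift n hn a j m γ' hj hm (fun k hk => hb k (.sum ha hk))).1 h with ⟨γ, hγ, rfl⟩
        exact ⟨γ, ⟨a, ha, hγ⟩, rfl⟩
      · rintro ⟨γ, ⟨a, ha, hγ⟩, rfl⟩
        exact ⟨_, ⟨a, ha, rfl⟩,
          (K_shift n hn a j m _ hj hm (fun k hk => hb k (.sum ha hk))).2 ⟨γ, hγ, rfl⟩⟩
  | omega a =>
      rw [shiftP_omega, KmemP_omega_iff]
      simp only [KmemP_omega_iff]
      exact K_shift n hn a j m γ' hj hm (fun k hk => hb k (.omega hk))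
  | Om J' =>
      have hbb : J' ≤ m → J' + n ≤ m := fun h => by
        have := hb (J' - m) (.om h); omega
      rw [shiftP_Om]
      split
      · next h =>
          simp only [KmemP_Om_iff]
          constructor
          · rintro ⟨h1, rfl⟩
            refine ⟨.Om (J' - (j-1)), ⟨by omega, rfl⟩, ?_⟩
            rw [shiftP_Om, if_pos (by omega)]
            congr 1; ring
          · rintro ⟨γ, ⟨h1, rfl⟩, rfl⟩
            rw [shiftP_Om, if_pos (by omega)]
            exact ⟨by omega, by congr 1; ring⟩
      · next h =>
          simp only [KmemP_Om_iff]
          constructor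
          · rintro ⟨h1, rfl⟩
            refine ⟨.Om (J' - (j-1)), ⟨h1, rfl⟩, ?_⟩
            rw [shiftP_Om, if_neg (by omega)]
          · rintro ⟨γ, ⟨h1, rfl⟩, rfl⟩
            rw [shiftP_Om, if_neg (by omega)]
            exact ⟨h1, rfl⟩
  | var v J' =>
      have hbb : J' ≤ m → J' + n ≤ m := fun h => by
        have := hb (J' - m) (.var h); omega
      rw [shiftP_var]
      split
      · next h =>
          simp only [KmemP_var_iff]
          constructor
          · rintro ⟨h1, rfl⟩
            refine ⟨.var v (J' - (j-1)), ⟨by omega, rfl⟩, ?_⟩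
            rw [shiftP_var, if_pos (by omega)]
            congr 1; ring
          · rintro ⟨γ, ⟨h1, rfl⟩, rfl⟩
            rw [shiftP_var, if_pos (by omega)]
            exact ⟨by omega, by congr 1; ring⟩
      · next h =>
          simp only [KmemP_var_iff]
          constructor
          · rintro ⟨h1, rfl⟩
            refine ⟨.var v (J' - (j-1)), ⟨h1, rfl⟩, ?_⟩
            rw [shiftP_var, if_neg (by omega)]
          · rintro ⟨γ, ⟨h1, rfl⟩, rfl⟩
            rw [shiftP_var, if_neg (by omega)]
            exact ⟨h1, rfl⟩
  | theta c =>
      have hshift : shiftP m n (OTP.theta c) = .theta (shiftP (m-1) n c) := shiftP_theta m n c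
      -- key bound: elements of FC(theta c) below m stay below m after shifting
      have hkey : ∀ k, FCmem (.theta c) 0 k → k ≤ m → k + n ≤ m := by
        intro k hk hkm
        have := FC_level hk m (by omega)
        have := hb _ this
        omega
      have hFC : ∀ k', FCmem (.theta (shiftP (m-1) n c)) 0 k' ↔
          ((∃ k, FCmem (.theta c) 0 k ∧ k ≤ m ∧ k' = k + n ∧ k' ≤ 0) ∨
           (FCmem (.theta c) 0 k' ∧ m < k')) := by
        intro k'
        have := FC_shift n hn (.theta c) m 0 k'
        rw [hshift] at this
        simpa using this
      have hdich_small : (∀ k, FCmem (.theta (shiftP (m-1) n c)) 0 k → k < j) ↔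
          (∀ k, FCmem (.theta c) 0 k → k < j) := by
        constructor
        · intro hs k hk
          rcases le_or_gt k m with h1 | h1
          · omega
          · exact hs k ((hFC k).2 (Or.inr ⟨hk, h1⟩))
        · intro hs k' hk'
          rcases (hFC k').1 hk' with ⟨k, hk, h1, rfl, h2⟩ | ⟨hk, h1⟩
          · have := hkey k hk h1; omega
          · exact hs k' hk
      have hdich_big : (∃ k, FCmem (.theta (shiftP (m-1) n c)) 0 k ∧ j ≤ k) ↔
          (∃ k, FCmem (.theta c) 0 k ∧ j ≤ k) := by
        constructor
        · rintro ⟨k', hk', hjk⟩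
          rcases (hFC k').1 hk' with ⟨k, hk, h1, rfl, h2⟩ | ⟨hk, h1⟩
          · have := hkey k hk h1; omega
          · exact ⟨k', hk, hjk⟩
        · rintro ⟨k, hk, hjk⟩
          exact ⟨k, (hFC k).2 (Or.inr ⟨hk, by omega⟩), hjk⟩
      rw [hshift, KmemP_theta_iff]
      constructor
      · rintro (⟨hs, rfl⟩ | ⟨hbig, hK⟩)
        · refine ⟨shiftP 0 (1-j) (.theta c), .thetaSmall (hdich_small.1 hs), ?_⟩
          have := shift_comm n (1-j) m 0 (.theta c) (by omega) (by omega) hb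
          rw [hshift] at this
          rw [this]
          congr 1
          omega
        · have hbc : ∀ k, FCmem c (m-1) k → k ≤ -n := fun k hk => hb k (.theta hk)
          rcases (K_shift n hn c (j-1) (m-1) _ (by omega) (by omega) hbc).1 hK with ⟨γ, hγ, rfl⟩
          refine ⟨γ, .thetaBig (hdich_big.1 hbig) hγ, ?_⟩
          congr 1
          omega
      · rintro ⟨γ, hγ, rfl⟩
        rcases KmemP_theta_iff.1 hγ with ⟨hs, rfl⟩ | ⟨hbig, hK⟩
        · refine Or.inl ⟨hdich_small.2 hs, ?_⟩
          have := shift_comm n (1-j) m 0 (.theta c) (by omega) (by omega) hb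
          rw [hshift] at this
          have e : m - j + 1 = m + (1 - j) := by ring
          rw [e]
          exact this.symm
        · refine Or.inr ⟨hdich_big.2 hbig, ?_⟩
          have hbc : ∀ k, FCmem c (m-1) k → k ≤ -n := fun k hk => hb k (.theta hk)
          have := (K_shift n hn c (j-1) (m-1) (shiftP ((m-1)-(j-1)+1) n γ) (by omega) (by omega) hbc).2
            ⟨γ, hK, rfl⟩
          have e : (m-1)-(j-1)+1 = m-j+1 := by ring
          rwa [e] at this
termination_by sizeOf x
decreasing_by
  all_goals subst_vars
  all_goals simp_wf
  all_goals try omega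
  all_goals (have := List.sizeOf_lt_of_mem ha; omega)
theorem K_Bnd (n : ℤ) {j : ℤ} {x γ : OTP} (h : KmemP j x γ) : ∀ m : ℤ, j ≤ 0 → m ≤ j - 1 →
    (∀ k, FCmem x m k → k ≤ -n) → ∀ k, FCmem γ (m-j+1) k → k ≤ -n := by
  induction h with
  | @sum J l a β ha _ ih =>
      intro m hj hm hb
      exact ih m hj hm (fun k hk => hb k (.sum ha hk))
  | @omega J a β _ ih =>
      intro m hj hm hb
      exact ih m hj hm (fun k hk => hb k (.omega hk))
  | @om J J' h =>
      intro m hj hm hb k hk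
      rcases FCmem_Om_iff.1 hk with ⟨h1, rfl⟩
      have := hb (J' - m) (.om (by omega))
      omega
  | @var J v J' h =>
      intro m hj hm hb k hk
      rcases FCmem_var_iff.1 hk with ⟨h1, rfl⟩
      have := hb (J' - m) (.var (by omega))
      omega
  | @thetaSmall J a hs =>
      intro m hj hm hb k hk
      rcases (FC_shift (1-J) (by omega) (.theta a) 0 (m-J+1) k).1 hk with
        ⟨k0, hk0, h1, rfl, h2⟩ | ⟨hk0, h1⟩
      · have := FC_level hk0 m (by omega)
        have e : k0 + (m - J + 1 - m) = k0 + (1 - J) := by ring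
        rw [e] at this
        exact hb _ this
      · have := FC_nonpos hk0
        omega
  | @thetaBig J a β hbig _ ih =>
      intro m hj hm hb k hk
      have := ih (m-1) (by omega) (by omega) (fun k hk => hb k (.theta hk)) k
      have e : m - 1 - (J - 1) + 1 = m - J + 1 := by ring
      rw [e] at this
      exact this hk
theorem mem_sub_iff {s t : Multiset OTP} {b : OTP} :
    b ∈ s - t ↔ Multiset.count b t < Multiset.count b s := by
  rw [← Multiset.count_pos, Multiset.count_sub]; omega

theorem count_map_inj {s : Multiset OTP} {f : OTP → OTP} {b : OTP}
    (h : ∀ a ∈ s, f a = f b → a = b) :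
    Multiset.count (f b) (Multiset.map f s) = Multiset.count b s := by
  classical
  rw [Multiset.count_map, Multiset.count_eq_card_filter_eq]
  congr 1
  apply Multiset.filter_congr
  intro a ha
  constructor
  · intro h2
    exact ((h a ha h2.symm) ▸ rfl : b = a)
  · rintro rfl; rfl
theorem shift_lt_main (n : ℤ) (hn : 0 ≤ n) {α β : OTP} (h : ltP α β) : ∀ m : ℤ, m ≤ 0 →
    (∀ k, FCmem α m k → k ≤ -n) → (∀ k, FCmem β m k → k ≤ -n) →
    ltP (shiftP m n α) (shiftP m n β) := by
  induction h with
  | @sum_sum al bl b hb hal ih =>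
      intro m hm hbα hbβ
      rw [shiftP_sum, shiftP_sum]
      set f := shiftP m n with hf
      have hAl : ∀ a ∈ al, ∀ k, FCmem a m k → k ≤ -n :=
        fun a ha k hk => hbα k (.sum ha hk)
      have hBl : ∀ a ∈ bl, ∀ k, FCmem a m k → k ≤ -n :=
        fun a ha k hk => hbβ k (.sum ha hk)
      have hbmem : b ∈ bl := by
        have h1 := mem_sub_iff.1 hb
        have h2 : 0 < Multiset.count b (bl : Multiset OTP) := by omega
        exact Multiset.count_pos.1 h2
      have hcount : Multiset.count b (↑al : Multiset OTP) < Multiset.count b ↑bl :=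
        mem_sub_iff.1 hb
      apply ltP.sum_sum (f b)
      · rw [mem_sub_iff]
        simp only [← Multiset.map_coe]
        rw [count_map_inj (fun a ha hfa => shift_inj (hAl a ha) (hBl b hbmem) hfa),
          count_map_inj (fun a ha hfa => shift_inj (hBl a ha) (hBl b hbmem) hfa)]
        exact hcount
      · intro a' ha'
        have ha'mem : a' ∈ Multiset.map f ↑al := by
          have h1 := mem_sub_iff.1 (by simpa only [← Multiset.map_coe] using ha')
          exact Multiset.count_pos.1 (by omega)
        rcases Multiset.mem_map.1 ha'mem with ⟨a, ha, rfl⟩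
        have ha' : f a ∈ (↑(al.map f) : Multiset OTP) - ↑(bl.map f) := ha'
        rw [mem_sub_iff] at ha'
        simp only [← Multiset.map_coe] at ha'
        rw [count_map_inj (fun x hx hfx => shift_inj (hBl x hx) (hAl a ha) hfx),
          count_map_inj (fun x hx hfx => shift_inj (hAl x hx) (hAl a ha) hfx)] at ha'
        exact ih a (mem_sub_iff.2 ha') m hm (hAl a ha) (hBl b hbmem)
  | @h_sum_lt β al a hH ha hlt ih =>
      intro m hm hbα hbβ
      rw [shiftP_sum]
      exact ltP.h_sum_lt (shiftP m n a) (isH_shift hH m n)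
        (List.mem_map.2 ⟨a, ha, rfl⟩)
        (ih m hm hbα (fun k hk => hbβ k (.sum ha hk)))
  | @h_sum_mem β al hH ha =>
      intro m hm hbα hbβ
      rw [shiftP_sum]
      exact ltP.h_sum_mem (isH_shift hH m n) (List.mem_map.2 ⟨β, ha, rfl⟩)
  | @sum_h β al hH hal ih =>
      intro m hm hbα hbβ
      rw [shiftP_sum]
      refine ltP.sum_h (isH_shift hH m n) ?_
      intro a' ha'
      rcases List.mem_map.1 ha' with ⟨a, ha, rfl⟩
      exact ih a ha m hm (fun k hk => hbα k (.sum ha hk)) hbβ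
  | @omega_omega a b hlt ih =>
      intro m hm hbα hbβ
      rw [shiftP_omega, shiftP_omega]
      exact ltP.omega_omega (ih m hm (fun k hk => hbα k (.omega hk))
        (fun k hk => hbβ k (.omega hk)))
  | @sc_omega β a hSC hlt ih =>
      intro m hm hbα hbβ
      rw [shiftP_omega]
      exact ltP.sc_omega (isSC_shift hSC m n)
        (ih m hm hbα (fun k hk => hbβ k (.omega hk)))
  | @omega_sc_lt β a hSC hlt ih =>
      intro m hm hbα hbβ
      rw [shiftP_omega]
      exact ltP.omega_sc_lt (isSC_shift hSC m n)
        (ih m hm (fun k hk => hbα k (.omega hk)) hbβ)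
  | @omega_sc_eq β hSC =>
      intro m hm hbα hbβ
      rw [shiftP_omega]
      exact ltP.omega_sc_eq (isSC_shift hSC m n)
  | @om_om J J' hJ =>
      intro m hm hbα hbβ
      rw [shiftP_Om, shiftP_Om]
      by_cases h1 : J ≤ m
      · have hb1 := hbα (J - m) (.om h1)
        rw [if_pos h1]
        by_cases h2 : J' ≤ m
        · rw [if_pos h2]; exact ltP.om_om (by omega)
        · rw [if_neg h2]; exact ltP.om_om (by omega)
      · rw [if_neg h1, if_neg (by omega)]
        exact ltP.om_om hJ
  | @var_om v J =>
      intro m hm hbα hbβ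
      rw [shiftP_var, shiftP_Om]
      by_cases h1 : J ≤ m
      · rw [if_pos h1, if_pos h1]; exact ltP.var_om
      · rw [if_neg h1, if_neg h1]; exact ltP.var_om
  | @om_theta_lt J a β hK hlt ih =>
      intro m hm hbα hbβ
      rw [shiftP_theta]
      obtain ⟨J'', hJ⟩ : ∃ J'', shiftP m n (.Om J) = .Om J'' := by
        rw [shiftP_Om]; split <;> exact ⟨_, rfl⟩
      have hba : ∀ k, FCmem a (m-1) k → k ≤ -n := fun k hk => hbβ k (.theta hk)
      have hK' : KmemP 0 (shiftP (m-1) n a) (shiftP (m-1-0+1) n β) :=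
        (K_shift n hn a 0 (m-1) _ (by omega) (by omega) hba).2 ⟨β, hK, rfl⟩
      have e : m - 1 - 0 + 1 = m := by ring
      rw [e] at hK'
      have hbγ : ∀ k, FCmem β (m-1-0+1) k → k ≤ -n :=
        K_Bnd n hK (m-1) (by omega) (by omega) hba
      rw [e] at hbγ
      have := ih m hm hbα hbγ
      rw [hJ] at this ⊢
      exact ltP.om_theta_lt hK' this
  | @om_theta_eq J a hK =>
      intro m hm hbα hbβ
      rw [shiftP_theta]
      obtain ⟨J'', hJ⟩ : ∃ J'', shiftP m n (.Om J) = .Om J'' := by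
        rw [shiftP_Om]; split <;> exact ⟨_, rfl⟩
      have hba : ∀ k, FCmem a (m-1) k → k ≤ -n := fun k hk => hbβ k (.theta hk)
      have hK' : KmemP 0 (shiftP (m-1) n a) (shiftP (m-1-0+1) n (.Om J)) :=
        (K_shift n hn a 0 (m-1) _ (by omega) (by omega) hba).2 ⟨.Om J, hK, rfl⟩
      have e : m - 1 - 0 + 1 = m := by ring
      rw [e, hJ] at hK'
      rw [hJ]
      exact ltP.om_theta_eq hK'
  | @var_theta_lt v J a β hK hlt ih =>
      intro m hm hbα hbβ
      rw [shiftP_theta]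
      obtain ⟨J'', hJ⟩ : ∃ J'', shiftP m n (.var v J) = .var v J'' := by
        rw [shiftP_var]; split <;> exact ⟨_, rfl⟩
      have hba : ∀ k, FCmem a (m-1) k → k ≤ -n := fun k hk => hbβ k (.theta hk)
      have hK' : KmemP 0 (shiftP (m-1) n a) (shiftP (m-1-0+1) n β) :=
        (K_shift n hn a 0 (m-1) _ (by omega) (by omega) hba).2 ⟨β, hK, rfl⟩
      have e : m - 1 - 0 + 1 = m := by ring
      rw [e] at hK'
      have hbγ : ∀ k, FCmem β (m-1-0+1) k → k ≤ -n :=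
        K_Bnd n hK (m-1) (by omega) (by omega) hba
      rw [e] at hbγ
      have := ih m hm hbα hbγ
      rw [hJ] at this ⊢
      exact ltP.var_theta_lt hK' this
  | @var_theta_eq v J a hK =>
      intro m hm hbα hbβ
      rw [shiftP_theta]
      obtain ⟨J'', hJ⟩ : ∃ J'', shiftP m n (.var v J) = .var v J'' := by
        rw [shiftP_var]; split <;> exact ⟨_, rfl⟩
      have hba : ∀ k, FCmem a (m-1) k → k ≤ -n := fun k hk => hbβ k (.theta hk)
      have hK' : KmemP 0 (shiftP (m-1) n a) (shiftP (m-1-0+1) n (.var v J)) :=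
        (K_shift n hn a 0 (m-1) _ (by omega) (by omega) hba).2 ⟨.var v J, hK, rfl⟩
      have e : m - 1 - 0 + 1 = m := by ring
      rw [e, hJ] at hK'
      rw [hJ]
      exact ltP.var_theta_eq hK'
  | @theta_om J a hall ih =>
      intro m hm hbα hbβ
      rw [shiftP_theta]
      obtain ⟨J'', hJ⟩ : ∃ J'', shiftP m n (.Om J) = .Om J'' := by
        rw [shiftP_Om]; split <;> exact ⟨_, rfl⟩
      rw [hJ]
      refine ltP.theta_om ?_
      intro β' hK'
      have hba : ∀ k, FCmem a (m-1) k → k ≤ -n := fun k hk => hbα k (.theta hk)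
      rcases (K_shift n hn a 0 (m-1) β' (by omega) (by omega) hba).1 hK' with ⟨β, hKβ, rfl⟩
      have e : m - 1 - 0 + 1 = m := by ring
      rw [e]
      have hbγ : ∀ k, FCmem β (m-1-0+1) k → k ≤ -n :=
        K_Bnd n hKβ (m-1) (by omega) (by omega) hba
      rw [e] at hbγ
      have := ih β hKβ m hm hbγ hbβ
      rwa [hJ] at this
  | @theta_theta_main a b hab hKall ih1 ih2 =>
      intro m hm hbα hbβ
      rw [shiftP_theta, shiftP_theta]
      have hba : ∀ k, FCmem a (m-1) k → k ≤ -n := fun k hk => hbα k (.theta hk)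
      have hbb : ∀ k, FCmem b (m-1) k → k ≤ -n := fun k hk => hbβ k (.theta hk)
      refine ltP.theta_theta_main (ih1 (m-1) (by omega) hba hbb) ?_
      intro γ' hK'
      rcases (K_shift n hn a 0 (m-1) γ' (by omega) (by omega) hba).1 hK' with ⟨γ, hKγ, rfl⟩
      have e : m - 1 - 0 + 1 = m := by ring
      rw [e]
      have hbγ : ∀ k, FCmem γ (m-1-0+1) k → k ≤ -n :=
        K_Bnd n hKγ (m-1) (by omega) (by omega) hba
      rw [e] at hbγ
      have := ih2 γ hKγ m hm hbγ hbβ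
      rwa [shiftP_theta] at this
  | @theta_theta_K_lt a b γ hba' hK hlt ih1 ih2 =>
      intro m hm hbα hbβ
      rw [shiftP_theta, shiftP_theta]
      have hba : ∀ k, FCmem a (m-1) k → k ≤ -n := fun k hk => hbα k (.theta hk)
      have hbb : ∀ k, FCmem b (m-1) k → k ≤ -n := fun k hk => hbβ k (.theta hk)
      have hK' : KmemP 0 (shiftP (m-1) n b) (shiftP (m-1-0+1) n γ) :=
        (K_shift n hn b 0 (m-1) _ (by omega) (by omega) hbb).2 ⟨γ, hK, rfl⟩
      have e : m - 1 - 0 + 1 = m := by ring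
      rw [e] at hK'
      have hbγ : ∀ k, FCmem γ (m-1-0+1) k → k ≤ -n :=
        K_Bnd n hK (m-1) (by omega) (by omega) hbb
      rw [e] at hbγ
      have h2 := ih2 m hm hbα hbγ
      rw [shiftP_theta] at h2
      exact ltP.theta_theta_K_lt (ih1 (m-1) (by omega) hbb hba) hK' h2
  | @theta_theta_K_eq a b hba' hK ih1 =>
      intro m hm hbα hbβ
      rw [shiftP_theta, shiftP_theta]
      have hba : ∀ k, FCmem a (m-1) k → k ≤ -n := fun k hk => hbα k (.theta hk)
      have hbb : ∀ k, FCmem b (m-1) k → k ≤ -n := fun k hk => hbβ k (.theta hk)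
      have hK' : KmemP 0 (shiftP (m-1) n b) (shiftP (m-1-0+1) n (.theta a)) :=
        (K_shift n hn b 0 (m-1) _ (by omega) (by omega) hbb).2 ⟨.theta a, hK, rfl⟩
      have e : m - 1 - 0 + 1 = m := by ring
      rw [e, shiftP_theta] at hK'
      exact ltP.theta_theta_K_eq (ih1 (m-1) (by omega) hbb hba) hK'

/-- if `α < β`, `max FC^{≤0}(α) ≤ -n`, and `max FC^{≤0}(β) ≤ -n`,
then `α^{≤0}_{+n} < β^{≤0}_{+n}`. -/
theorem shift_lt_shift (n : ℕ) (α β : OTP) (h : ltP α β)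
    (hα : ∀ k : ℤ, FCmem α 0 k → k ≤ -(n : ℤ))
    (hβ : ∀ k : ℤ, FCmem β 0 k → k ≤ -(n : ℤ)) :
    ltP (shiftP 0 (n : ℤ) α) (shiftP 0 (n : ℤ) β) :=
  shift_lt_main (n : ℤ) (by positivity) h 0 le_rfl hα hβ

end Stmt7
end
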